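/- For a permutation σ ∈ S_n with bt(σ) = T, and for any edge of T where node i is a child of node j, the inequality x_i ≤ x_j holds for the point x = (σ⁻¹(1),...,σ⁻¹(n)); equivalently, the braid cone of σ is contained in the sylvester cone of T. -/

import Mathlib

open Equiv

/-- Binary trees with internal nodes labeled by natural numbers. -/
inductive LTree : Type
  | leaf : LTree
  | node : LTree → ℕ → LTree → LTree
  deriving DecidableEq

namespace LTree

/-- Binary search tree insertion. -/
def insert (x : ℕ) : LTree → LTree
  | leaf => node leaf x leaf
  | node l v r => if x < v then node (insert x l) v r else node l v (insert x r)

/-- Binary search tree built from a word by inserting its letters from right to left. -/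
def ofWord (w : List ℕ) : LTree := w.foldr insert leaf

/-- The label of the root, if any. -/
def rootLabel : LTree → Option ℕ
  | leaf => none
  | node _ v _ => some v

/-- `child T i j` : the node labeled `i` is a child of the node labeled `j` in `T`. -/
def child : LTree → ℕ → ℕ → Prop
  | leaf, _, _ => False
  | node l v r, i, j =>
      (j = v ∧ (l.rootLabel = some i ∨ r.rootLabel = some i)) ∨ child l i j ∨ child r i j

end LTree

/-- The one-line notation of a permutation of `Fin n`, as a word on `ℕ`. -/
def word {n : ℕ} (σ : Perm (Fin n)) : List ℕ := List.ofFn fun i => (σ i : ℕ)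

/-- The binary tree map `bt` (binary search tree insertion of `σ_n, …, σ_1`). -/
def bt {n : ℕ} (σ : Perm (Fin n)) : LTree := LTree.ofWord (word σ)

-- auxiliary lemmas
namespace LTree

/-- Membership of a label in a tree. -/
def Memb : LTree → ℕ → Prop
  | leaf, _ => False
  | node l v r, x => x = v ∨ Memb l x ∨ Memb r x

lemma memb_of_rootLabel {t : LTree} {y : ℕ} (h : t.rootLabel = some y) : t.Memb y := by
  cases t with
  | leaf => simp [rootLabel] at h
  | node l v r => simp [rootLabel] at h; simp [Memb, h]

lemma rootLabel_insert {x : ℕ} {t : LTree} {y : ℕ}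
    (h : (insert x t).rootLabel = some y) : y = x ∨ t.rootLabel = some y := by
  cases t with
  | leaf => simp [insert, rootLabel] at h; exact Or.inl h.symm
  | node l v r =>
    by_cases hx : x < v <;> simp [insert, hx, rootLabel] at h ⊢ <;> exact Or.inr h

lemma memb_insert {x : ℕ} {t : LTree} {y : ℕ}
    (h : (insert x t).Memb y) : y = x ∨ t.Memb y := by
  induction t with
  | leaf => simp [insert, Memb] at h; exact Or.inl h
  | node l v r ihl ihr =>
    by_cases hx : x < v <;> simp [insert, hx, Memb] at h ⊢
    · rcases h with h | h | h
      · tauto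
      · rcases ihl h with h' | h' <;> tauto
      · tauto
    · rcases h with h | h | h
      · tauto
      · tauto
      · rcases ihr h with h' | h' <;> tauto

lemma child_insert {x : ℕ} {t : LTree} {i j : ℕ}
    (h : (insert x t).child i j) : (i = x ∧ t.Memb j) ∨ t.child i j := by
  induction t with
  | leaf =>
    simp [insert, child, rootLabel] at h
  | node l v r ihl ihr =>
    by_cases hx : x < v <;> simp [insert, hx, child] at h ⊢
    · rcases h with ⟨hj, hr⟩ | h | h
      · rcases hr with hr | hr
        · rcases rootLabel_insert hr with h' | h'
          · exact Or.inl ⟨h', by simp [Memb, hj]⟩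
          · exact Or.inr (Or.inl ⟨hj, Or.inl h'⟩)
        · exact Or.inr (Or.inl ⟨hj, Or.inr hr⟩)
      · rcases ihl h with ⟨hi, hm⟩ | h'
        · exact Or.inl ⟨hi, by simp [Memb, hm]⟩
        · tauto
      · tauto
    · rcases h with ⟨hj, hr⟩ | h | h
      · rcases hr with hr | hr
        · exact Or.inr (Or.inl ⟨hj, Or.inl hr⟩)
        · rcases rootLabel_insert hr with h' | h'
          · exact Or.inl ⟨h', by simp [Memb, hj]⟩
          · exact Or.inr (Or.inl ⟨hj, Or.inr h'⟩)
      · tauto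
      · rcases ihr h with ⟨hi, hm⟩ | h'
        · exact Or.inl ⟨hi, by simp [Memb, hm]⟩
        · tauto

lemma memb_ofWord {w : List ℕ} {y : ℕ} (h : (ofWord w).Memb y) : y ∈ w := by
  induction w with
  | nil => simp [ofWord, Memb] at h
  | cons a w ih =>
    rcases memb_insert (t := ofWord w) (x := a) h with h' | h'
    · simp [h']
    · exact List.mem_cons_of_mem _ (ih h')

lemma child_memb {t : LTree} {i j : ℕ} (h : t.child i j) : t.Memb i ∧ t.Memb j := by
  induction t with
  | leaf => simp [child] at h
  | node l v r ihl ihr =>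
    simp [child] at h
    rcases h with ⟨hj, hr⟩ | h | h
    · constructor
      · rcases hr with hr | hr
        · exact Or.inr (Or.inl (memb_of_rootLabel hr))
        · exact Or.inr (Or.inr (memb_of_rootLabel hr))
      · simp [Memb, hj]
    · rcases ihl h with ⟨h1, h2⟩; exact ⟨Or.inr (Or.inl h1), Or.inr (Or.inl h2)⟩
    · rcases ihr h with ⟨h1, h2⟩; exact ⟨Or.inr (Or.inr h1), Or.inr (Or.inr h2)⟩

lemma key {w : List ℕ} (hw : w.Nodup) {i j : ℕ} (h : (ofWord w).child i j) :
    i ∈ w ∧ j ∈ w ∧ w.idxOf i ≤ w.idxOf j := by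
  induction w with
  | nil => simp [ofWord, child] at h
  | cons a w ih =>
    rcases child_insert (t := ofWord w) (x := a) h with ⟨hi, hm⟩ | h'
    · have hjw : j ∈ w := memb_ofWord hm
      subst hi
      refine ⟨List.mem_cons_self, List.mem_cons_of_mem _ hjw, ?_⟩
      simp [List.idxOf_cons_self]
    · have hnd : w.Nodup := (List.nodup_cons.mp hw).2
      have ha : a ∉ w := (List.nodup_cons.mp hw).1
      obtain ⟨hi, hj, hle⟩ := ih hnd h'
      have hia : i ≠ a := fun e => ha (e ▸ hi)
      have hja : j ≠ a := fun e => ha (e ▸ hj)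
      refine ⟨List.mem_cons_of_mem _ hi, List.mem_cons_of_mem _ hj, ?_⟩
      rw [List.idxOf_cons_ne _ (Ne.symm hia), List.idxOf_cons_ne _ (Ne.symm hja)]
      omega

end LTree

lemma word_nodup {n : ℕ} (σ : Perm (Fin n)) : (word σ).Nodup := by
  rw [word, List.nodup_ofFn]
  exact fun a b hab => σ.injective (Fin.val_injective hab)

lemma indexOf_word {n : ℕ} (σ : Perm (Fin n)) (k : Fin n) :
    (word σ).idxOf (σ k : ℕ) = (k : ℕ) := by
  have h1 : (word σ).get ⟨k, by simp [word]⟩ = (σ k : ℕ) := by simp [word]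
  have hlt : (word σ).idxOf (σ k : ℕ) < (word σ).length := by
    rw [List.idxOf_lt_length_iff]
    exact h1 ▸ List.get_mem _ _
  have h2 := List.idxOf_get hlt
  have := (List.nodup_iff_injective_get.mp (word_nodup σ)) (h2.trans h1.symm)
  exact congrArg Fin.val this



/-- If `bt(σ) = T` and the node `i` is a child of the node `j` in `T`, then the
point `x = (σ⁻¹(1), …, σ⁻¹(n))` satisfies `x_i ≤ x_j`; equivalently, the braid
cone of `σ` is contained in the sylvester cone of `T`. -/
theorem braid_cone_subset_sylvester_cone (n : ℕ) (σ : Perm (Fin n)) (T : LTree)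
    (hσ : bt σ = T) (i j : Fin n) (hij : T.child i j) :
    (σ⁻¹ i : ℕ) ≤ (σ⁻¹ j : ℕ) := by
  subst hσ
  obtain ⟨_, _, hle⟩ := LTree.key (word_nodup σ) hij
  have hi : (word σ).idxOf (i : ℕ) = (σ⁻¹ i : ℕ) := by
    have := indexOf_word σ (σ⁻¹ i); simpa using this
  have hj : (word σ).idxOf (j : ℕ) = (σ⁻¹ j : ℕ) := by
    have := indexOf_word σ (σ⁻¹ j); simpa using this
  rw [hi, hj] at hle
  exact hle
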